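/- arXiv:2008.08955 — 3 statements merged into one kernel-verified Lean document; each statement's English description precedes it below -/
import Mathlib

section
/- Let λ : {0,1}^L → {0,1}^l be a linear hash function with λ(e^L_{L-1}) = λ(1^{d-1}0^{L-d+1}). With Z, U, V as defined, λ(U) = λ(V) as sets, and |λ(B^{L-1}_{d-2})| ≤ |B^{L-1}_{d-2}| − |U|. -/
/-- Hamming weight of a binary word. -/
def hamWt {L : ℕ} (x : Fin L → ZMod 2) : ℕ :=
  (Finset.univ.filter fun i => x i ≠ 0).card

/-- Weight of the `x`-part: the first `d-1` coordinates. -/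
def wtX (L d : ℕ) (z : Fin L → ZMod 2) : ℕ :=
  (Finset.univ.filter fun i : Fin L => z i ≠ 0 ∧ i.val < d - 1).card

/-- Weight of the `y`-part: coordinates `d, …, L-2` (1-indexed), i.e. the
`L-d-1` coordinates between the `x`-part and the last two coordinates. -/
def wtY (L d : ℕ) (z : Fin L → ZMod 2) : ℕ :=
  (Finset.univ.filter fun i : Fin L => z i ≠ 0 ∧ d - 1 ≤ i.val ∧ i.val < L - 2).card

/-- The set `Z` of words of the form `x y 0 0` with `|x| = d-1`,
`|y| = L-d-1`, `‖x‖ + ‖y‖ ≤ d-3` and `‖y‖ ≤ ‖x‖ - 1`. -/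
def Zset (L d : ℕ) : Set (Fin L → ZMod 2) :=
  {z | (∀ i : Fin L, L - 2 ≤ i.val → z i = 0) ∧
    wtX L d z + wtY L d z ≤ d - 3 ∧ wtY L d z + 1 ≤ wtX L d z}

/-- `e^L_{L-1}`: the word with a single 1 in position `L-1` (1-indexed). -/
def eLm1 (L : ℕ) : Fin L → ZMod 2 :=
  fun j => if j.val = L - 2 then 1 else 0

/-- `1^{d-1} 0^{L-d+1}`: ones in the first `d-1` positions. -/
def onesW (L d : ℕ) : Fin L → ZMod 2 :=
  fun j => if j.val < d - 1 then 1 else 0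

/-- `U = { e^L_{L-1} ⊕ z : z ∈ Z }`. -/
def Uset (L d : ℕ) : Set (Fin L → ZMod 2) := Set.image (fun z => eLm1 L + z) (Zset L d)

/-- `V = { 1^{d-1}0^{L-d+1} ⊕ z : z ∈ Z }`. -/
def Vset (L d : ℕ) : Set (Fin L → ZMod 2) := Set.image (fun z => onesW L d + z) (Zset L d)

/-!
Since `λ` is additive and identifies `e^L_{L-1}` with `1^{d-1}0^{L-d+1}`, it identifies the two
translates `U` and `V` of `Z`, so `λ(U) = λ(V)`. Both lie in `B = B^{L-1}_{d-2}` and they are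
disjoint, so every value `λ` takes on `U` is already taken on `B \ U`; hence
`|λ(B)| = |λ(B \ U)| ≤ |B| - |U|`.
-/

open Finset

theorem Set.image_eq_image_sdiff_of_image_subset {α β : Type*} {f : α → β} {S A : Set α}
    (h : f '' A ⊆ f '' (S \ A)) : f '' S = f '' (S \ A) := by
  refine (Set.image_mono Set.sdiff_subset).antisymm' ?_
  rintro _ ⟨s, hs, rfl⟩
  by_cases hsA : s ∈ A
  · exact h (Set.mem_image_of_mem f hsA)
  · exact Set.mem_image_of_mem f ⟨hs, hsA⟩

theorem Set.ncard_image_le_ncard_sub {α β : Type*} {f : α → β} {S A : Set α}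
    (hS : S.Finite) (hAS : A ⊆ S) (h : f '' A ⊆ f '' (S \ A)) :
    (f '' S).ncard ≤ S.ncard - A.ncard := by
  rw [Set.image_eq_image_sdiff_of_image_subset h, ← Set.ncard_sdiff hAS (hS.subset hAS)]
  exact Set.ncard_image_le hS.sdiff

theorem image_image_add_left_eq_of_map_eq {G H : Type*} [Add G] [Add H] {f : G → H}
    (hf : ∀ x y, f (x + y) = f x + f y) {a b : G} (hab : f a = f b) (Z : Set G) :
    f '' ((a + ·) '' Z) = f '' ((b + ·) '' Z) := by
  simp only [Set.image_image, hf, hab]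

theorem hammingNorm_add_le {ι : Type*} [Fintype ι] [DecidableEq ι] {β : ι → Type*}
    [∀ i, AddZeroClass (β i)] [∀ i, DecidableEq (β i)] (x y : ∀ i, β i) :
    hammingNorm (x + y) ≤ hammingNorm x + hammingNorm y := by
  refine (card_le_card fun i hi => ?_).trans (card_union_le _ _)
  simp only [mem_filter, mem_univ, true_and, mem_union, Pi.add_apply] at hi ⊢
  by_contra! h
  simp [h.1, h.2] at hi

theorem ZMod.one_add_ne_zero_iff (a : ZMod 2) : 1 + a ≠ 0 ↔ a = 0 := by
  revert a; decide

section Weights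

variable {L d : ℕ} {z : Fin L → ZMod 2}

theorem hamWt_eLm1_le_one : hamWt (eLm1 L) ≤ 1 := by
  refine card_le_one.2 fun i hi j hj => Fin.ext ?_
  simp only [mem_filter, mem_univ, true_and, eLm1, ne_eq, ite_eq_right_iff, not_forall] at hi hj
  exact hi.1.trans hj.1.symm

theorem hamWt_le_wtX_add_wtY (hz : ∀ i : Fin L, L - 2 ≤ i.val → z i = 0) :
    hamWt z ≤ wtX L d z + wtY L d z := by
  refine (card_le_card fun i hi => ?_).trans (card_union_le _ _)
  simp only [mem_filter, mem_univ, true_and, mem_union] at hi ⊢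
  have hi2 : i.val < L - 2 := by
    by_contra! h
    exact hi (hz i h)
  rcases lt_or_ge i.val (d - 1) with h | h
  exacts [Or.inl ⟨hi, h⟩, Or.inr ⟨hi, h, hi2⟩]

theorem wtX_onesW_add_add_wtX_le : wtX L d (onesW L d + z) + wtX L d z ≤ d - 1 := by
  have hdisj : Disjoint (univ.filter fun i : Fin L => (onesW L d + z) i ≠ 0 ∧ i.val < d - 1)
      (univ.filter fun i : Fin L => z i ≠ 0 ∧ i.val < d - 1) := by
    refine disjoint_filter.2 fun i _ hi hzi => ?_
    simp only [Pi.add_apply, onesW, if_pos hi.2, ZMod.one_add_ne_zero_iff] at hi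
    exact hzi.1 hi.1
  calc wtX L d (onesW L d + z) + wtX L d z
      = #((univ.filter fun i : Fin L => (onesW L d + z) i ≠ 0 ∧ i.val < d - 1) ∪
          (univ.filter fun i : Fin L => z i ≠ 0 ∧ i.val < d - 1)) :=
        (card_union_of_disjoint hdisj).symm
    _ ≤ #(univ.filter fun i : Fin L => i.val < d - 1) := card_le_card fun i hi => by
      simp only [mem_union, mem_filter, mem_univ, true_and] at hi ⊢
      exact hi.elim And.right And.right
    _ ≤ d - 1 := Fin.card_filter_val_lt.trans_le (min_le_right _ _)

theorem wtY_onesW_add : wtY L d (onesW L d + z) = wtY L d z := by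
  refine congrArg card (filter_congr fun i _ => and_congr_left fun hi => ?_)
  rw [Pi.add_apply, onesW, if_neg (by omega), zero_add]

theorem add_apply_eq_zero_of_mem_Zset {a : Fin L → ZMod 2} (hz : z ∈ Zset L d) {i : Fin L}
    (hi : L - 2 ≤ i.val) (ha : a i = 0) : (a + z) i = 0 := by
  simp [ha, hz.1 i hi]

theorem hamWt_eLm1_add_le (hz : z ∈ Zset L d) : hamWt (eLm1 L + z) ≤ d - 2 := by
  obtain ⟨hz0, hsum, hlt⟩ := hz
  -- `hamWt` is `hammingNorm` by definition
  calc hamWt (eLm1 L + z) ≤ hamWt (eLm1 L) + hamWt z := hammingNorm_add_le _ _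
    _ ≤ 1 + (wtX L d z + wtY L d z) := add_le_add hamWt_eLm1_le_one (hamWt_le_wtX_add_wtY hz0)
    _ ≤ d - 2 := by omega

theorem hamWt_onesW_add_le (hdL : d < L) (hz : z ∈ Zset L d) :
    hamWt (onesW L d + z) ≤ d - 2 := by
  have hflip := wtX_onesW_add_add_wtX_le (L := L) (d := d) (z := z)
  calc hamWt (onesW L d + z) ≤ wtX L d (onesW L d + z) + wtY L d (onesW L d + z) :=
        hamWt_le_wtX_add_wtY fun i hi =>
          add_apply_eq_zero_of_mem_Zset hz hi (by simp [onesW]; omega)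
    _ = wtX L d (onesW L d + z) + wtY L d z := by rw [wtY_onesW_add]
    _ ≤ d - 2 := by have := hz.2.2; omega

end Weights

theorem Uset_subset {L d : ℕ} (hL : 2 ≤ L) :
    Uset L d ⊆ {x | hamWt x ≤ d - 2 ∧ x ⟨L - 1, by omega⟩ = 0} := by
  rintro _ ⟨z, hz, rfl⟩
  exact ⟨hamWt_eLm1_add_le hz,
    add_apply_eq_zero_of_mem_Zset hz (by dsimp only; omega) (by simp [eLm1]; omega)⟩

theorem Vset_subset {L d : ℕ} (hdL : d < L) :
    Vset L d ⊆ {x | hamWt x ≤ d - 2 ∧ x ⟨L - 1, by omega⟩ = 0} := by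
  rintro _ ⟨z, hz, rfl⟩
  exact ⟨hamWt_onesW_add_le hdL hz,
    add_apply_eq_zero_of_mem_Zset hz (by dsimp only; omega) (by simp [onesW]; omega)⟩

theorem disjoint_Uset_Vset {L d : ℕ} (hdL : d < L) : Disjoint (Uset L d) (Vset L d) := by
  rw [Set.disjoint_left]
  rintro _ ⟨z, hz, rfl⟩ ⟨z', hz', heq⟩
  set i : Fin L := ⟨L - 2, by omega⟩
  have h := congrFun heq i
  have hi : L - 2 ≤ i.val := le_rfl
  simp only [Pi.add_apply, hz.1 i hi, hz'.1 i hi, eLm1, onesW] at h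
  rw [if_pos rfl, if_neg (by simp only [i]; omega)] at h
  exact absurd h (by decide)

/-- if `f` is linear and `f (e^L_{L-1}) = f (1^{d-1}0^{L-d+1})`,
then `f(U) = f(V)` and `|f(B^{L-1}_{d-2})| ≤ |B^{L-1}_{d-2}| - |U|`, where
`B^{L-1}_{d-2}` is the set of words of weight at most `d-2` with last
coordinate `0`. -/
theorem stmt13 {L d l : ℕ} (hd : 4 ≤ d) (hdL : d < L)
    (f : (Fin L → ZMod 2) → (Fin l → ZMod 2))
    (hlin : ∀ x y, f (x + y) = f x + f y)
    (hval : f (eLm1 L) = f (onesW L d)) :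
    f '' Uset L d = f '' Vset L d ∧
      Nat.card (f '' {x : Fin L → ZMod 2 |
          hamWt x ≤ d - 2 ∧ x ⟨L - 1, by omega⟩ = 0}) ≤
        Nat.card {x : Fin L → ZMod 2 |
          hamWt x ≤ d - 2 ∧ x ⟨L - 1, by omega⟩ = 0} - Nat.card (Uset L d) := by
  have hUV : f '' Uset L d = f '' Vset L d :=
    image_image_add_left_eq_of_map_eq hlin hval (Zset L d)
  refine ⟨hUV, ?_⟩
  simp only [Nat.card_coe_set_eq]
  refine Set.ncard_image_le_ncard_sub (Set.toFinite _) (Uset_subset (by omega)) ?_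
  rw [hUV]
  exact Set.image_mono (Set.subset_sdiff.2 ⟨Vset_subset hdL, (disjoint_Uset_Vset hdL).symm⟩)
end

section
/- Let D ⊆ {0,1}^L \ {0} and let λ : {0,1}^L → {0,1}^l be a linear map satisfying: λ(e^L_i) = e^l_i for i = 1,...,l, and for each i = l+1,...,L, λ(e^L_i) ∉ λ(D'_i), where D'_i = {d ⊕ e^L_i : d ∈ D, d_i = 1, d_{i+1} = ... = d_L = 0}. Then λ(d) ≠ 0 for every d ∈ D. -/
/-- `D'_i = { d ⊕ e^L_i : d ∈ D, d_i = 1, d_j = 0 for j > i }`. -/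
def Dres {L : ℕ} (D : Set (Fin L → ZMod 2)) (i : Fin L) : Set (Fin L → ZMod 2) :=
  {w | ∃ d ∈ D, d i = 1 ∧ (∀ j : Fin L, i < j → d j = 0) ∧
    w = d + fun j : Fin L => if j = i then 1 else 0}

/-!
Let `i` be the highest position with `d_i = 1`. If `i ≥ l`, then `d ⊕ e^L_i ∈ D'_i` and
`λ(d ⊕ e^L_i) = λ(e^L_i) ⊕ λ(d)`, so `λ(d) = 0` would put `λ(e^L_i)` in `λ(D'_i)`. If `i < l`,
then `d` is supported on the first `l` positions, where `λ` is the identity, so `λ(d)_i = d_i = 1`.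
-/

theorem Pi.exists_max_ne_zero {ι M : Type*} [LinearOrder ι] [Fintype ι] [Zero M] {d : ι → M}
    (hd : d ≠ 0) : ∃ i, d i ≠ 0 ∧ ∀ j, i < j → d j = 0 := by
  classical
  obtain ⟨k, hk⟩ := Function.ne_iff.mp hd
  obtain ⟨i, hi, hmax⟩ :=
    Finset.exists_max_image (Finset.univ.filter fun j => d j ≠ 0) id ⟨k, by simpa using hk⟩
  refine ⟨i, (Finset.mem_filter.mp hi).2, fun j hij => ?_⟩
  by_contra hj
  exact (hmax j (by simpa using hj)).not_gt hij

theorem LinearMap.apply_eq_of_forall_le_eq_zero {R : Type*} [Semiring R] {L l : ℕ}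
    (f : (Fin L → R) →ₗ[R] (Fin l → R))
    (hbase : ∀ (j : Fin L) (hj : j.val < l),
      f (fun k => if j = k then 1 else 0) = Pi.single ⟨j, hj⟩ 1)
    {d : Fin L → R} (hd : ∀ j : Fin L, l ≤ j.val → d j = 0) (i : Fin L) (hi : i.val < l) :
    f d ⟨i, hi⟩ = d i := by
  rw [f.pi_apply_eq_sum_univ, Finset.sum_apply, Finset.sum_eq_single i]
  · simp [hbase i hi]
  · intro j _ hji
    rcases lt_or_ge j.val l with hjl | hjl
    · have hij : (⟨i, hi⟩ : Fin l) ≠ ⟨j, hjl⟩ := by simpa [Fin.ext_iff] using hji.symm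
      rw [hbase j hjl, Pi.smul_apply, Pi.single_eq_of_ne hij, smul_zero]
    · simp [hd j hjl]
  · simp

theorem stmt15_general {L l : ℕ}
    (D : Set (Fin L → ZMod 2)) (hD0 : (0 : Fin L → ZMod 2) ∉ D)
    (f : (Fin L → ZMod 2) → (Fin l → ZMod 2))
    (hlin : ∀ x y, f (x + y) = f x + f y)
    (hbase : ∀ i : Fin l,
      f (fun j : Fin L => if j.val = i.val then 1 else 0) =
        fun j : Fin l => if j = i then 1 else 0)
    (hchoice : ∀ i : Fin L, l ≤ i.val →
      f (fun j : Fin L => if j = i then 1 else 0) ∉ f '' Dres D i) :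
    ∀ d ∈ D, f d ≠ 0 := by
  intro d hd hfd
  obtain ⟨i, hdi, htop⟩ := Pi.exists_max_ne_zero (ne_of_mem_of_not_mem hd hD0)
  replace hdi : d i = 1 := Fin.eq_one_of_ne_zero (d i) hdi
  rcases lt_or_ge i.val l with hil | hil
  · let F := (AddMonoidHom.mk' f hlin).toZModLinearMap 2
    have hFbase : ∀ (j : Fin L) (hj : j.val < l),
        F (fun k => if j = k then 1 else 0) = Pi.single ⟨j, hj⟩ 1 := fun j hj => by
      have hej : (fun k : Fin L => if j = k then (1 : ZMod 2) else 0) =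
          fun k => if k.val = j.val then 1 else 0 := by
        funext k; simp [Fin.ext_iff, eq_comm]
      change f _ = _
      rw [hej, hbase ⟨j, hj⟩]
      funext k; simp [Pi.single_apply]
    have hFd := F.apply_eq_of_forall_le_eq_zero hFbase
      (fun j hj => htop j (Fin.lt_def.mpr (hil.trans_le hj))) i hil
    simp [F, hfd, hdi] at hFd
  · refine hchoice i hil ⟨d + fun j => if j = i then 1 else 0, ⟨d, hd, hdi, htop, rfl⟩, ?_⟩
    rw [hlin, hfd, zero_add]

/-- let `D ⊆ {0,1}^L \ {0}` and `f` be a linear map with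
`f (e^L_i) = e^l_i` for `i = 1,…,l`, and `f (e^L_i) ∉ f(D'_i)` for
`i = l+1,…,L`. Then `f d ≠ 0` for every `d ∈ D`. -/
theorem stmt15 {L l : ℕ} (hl : l < L)
    (D : Set (Fin L → ZMod 2)) (hD0 : (0 : Fin L → ZMod 2) ∉ D)
    (f : (Fin L → ZMod 2) → (Fin l → ZMod 2))
    (hlin : ∀ x y, f (x + y) = f x + f y)
    (hbase : ∀ i : Fin l,
      f (fun j : Fin L => if j.val = i.val then 1 else 0) =
        fun j : Fin l => if j = i then 1 else 0)
    (hchoice : ∀ i : Fin L, l ≤ i.val →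
      f (fun j : Fin L => if j = i then 1 else 0) ∉ f '' Dres D i) :
    ∀ d ∈ D, f d ≠ 0 :=
  stmt15_general D hD0 f hlin hbase hchoice
end

section
/- Let D ⊆ {0,1}^L \ {0}, D⁺ = D ∪ {0}, and for x = x_1...x_L let x|_1^i = x_1...x_i 0...0 (zeroing coordinates after i). Define G_i = {d|_1^i : d ∈ D⁺}, H_i = G_i \ G_{i-1}, and F_i = {g ⊕ h ⊕ e^L_i : g ∈ G_{i-1}, h ∈ H_i}. Let λ : {0,1}^L → {0,1}^l be a linear map with λ(e^L_i) = e^l_i for i ≤ l and λ(e^L_i) ∉ λ(F_i) for i = l+1,...,L. Then all values λ(u), u ∈ D⁺, are pairwise distinct; in particular λ(d) ≠ 0 for all d ∈ D. -/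
/-- `x|_1^i`: keep the first `i` coordinates (1-indexed positions `1,…,i`),
zero out the rest. -/
def restr {L : ℕ} (i : ℕ) (x : Fin L → ZMod 2) : Fin L → ZMod 2 :=
  fun j => if j.val < i then x j else 0

/-- The word of length `L` with a single 1 at (0-indexed) coordinate `k`. -/
def eN (L k : ℕ) : Fin L → ZMod 2 :=
  fun j => if j.val = k then 1 else 0

/-- `G_i = { d|_1^i : d ∈ D⁺ }` where `D⁺ = D ∪ {0}`. -/
def Gset {L : ℕ} (D : Set (Fin L → ZMod 2)) (i : ℕ) : Set (Fin L → ZMod 2) :=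
  restr i '' (D ∪ {0})

/-- `H_i = G_i \ G_{i-1}`. -/
def Hset {L : ℕ} (D : Set (Fin L → ZMod 2)) (i : ℕ) : Set (Fin L → ZMod 2) :=
  Gset D i \ Gset D (i - 1)

/-- `F_i = { g ⊕ h ⊕ e^L_i : g ∈ G_{i-1}, h ∈ H_i }` (position `i` is
0-indexed coordinate `i-1`). -/
def Fset {L : ℕ} (D : Set (Fin L → ZMod 2)) (i : ℕ) : Set (Fin L → ZMod 2) :=
  {w | ∃ g ∈ Gset D (i - 1), ∃ h ∈ Hset D i, w = g + h + eN L (i - 1)}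

/-! The bits are recovered one at a time.  On `G_l` the map `f` is the identity on the first `l`
coordinates, hence injective.  Passing from `G_{i-1}` to `G_i`: two words of `G_{i-1}` are
separated by induction; two words of `H_i` become words of `G_{i-1}` after flipping bit `i`,
which `f` respects by linearity; and `g ∈ G_{i-1}`, `h ∈ H_i` with `f g = f h` would give
`f e_i = f (g ⊕ h ⊕ e_i) ∈ f(F_i)`, excluded by the choice of `f e_i`.  Finally `G_L = D⁺`. -/

section Restriction

variable {L : ℕ}

lemma restr_zero (x : Fin L → ZMod 2) : restr 0 x = 0 := by
  funext j
  simp [restr]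

lemma restr_length (x : Fin L → ZMod 2) : restr L x = x := by
  funext j
  simp [restr, j.isLt]

lemma restr_succ (p : Fin L) (x : Fin L → ZMod 2) :
    restr (p + 1) x = restr p x + x p • eN L p := by
  funext j
  by_cases hjp : j = p
  · subst hjp
    simp [restr, eN]
  · have : j.val ≠ p.val := Fin.val_ne_of_ne hjp
    simp only [restr, eN, Pi.add_apply, Pi.smul_apply, this, if_false, smul_zero, add_zero]
    congr 1
    grind

end Restriction

section Layers

variable {L : ℕ} {D : Set (Fin L → ZMod 2)}

lemma Gset_length : Gset D L = D ∪ {0} := by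
  simp [Gset, restr_length]

-- A word of H_{p+1} is d|_1^{p+1} with d_{p+1} = 1, so flipping that bit gives d|_1^p.
lemma add_eN_mem_Gset_of_mem_Hset (p : Fin L) {x : Fin L → ZMod 2} (hx : x ∈ Hset D (p + 1)) :
    x + eN L p ∈ Gset D p := by
  simp only [Hset, Nat.add_sub_cancel] at hx
  obtain ⟨⟨d, hd, rfl⟩, hxG⟩ := hx
  have hdp : d p = 1 := by
    by_contra hdp
    refine hxG ⟨d, hd, ?_⟩
    rw [restr_succ, (by decide +revert : ∀ a : ZMod 2, a ≠ 1 → a = 0) _ hdp, zero_smul, add_zero]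
  refine ⟨d, hd, ?_⟩
  rw [restr_succ, hdp, one_smul, add_assoc, ZModModule.add_self, add_zero]

lemma injOn_Gset_succ {M : Type*} [AddMonoid M] (f : (Fin L → ZMod 2) →+ M) (p : Fin L)
    (hinj : Set.InjOn f (Gset D p)) (hF : f (eN L p) ∉ f '' Fset D (p + 1)) :
    Set.InjOn f (Gset D (p + 1)) := by
  have hmix : ∀ x ∈ Gset D p, ∀ y ∈ Hset D (p + 1), f x ≠ f y := by
    intro x hx y hy hxy
    refine hF ⟨x + y + eN L p, ⟨x, by simpa using hx, y, hy, by simp⟩, ?_⟩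
    rw [map_add, map_add, hxy, ← map_add, ZModModule.add_self, map_zero, zero_add]
  have hH : ∀ {x}, x ∈ Gset D (p + 1) → x ∉ Gset D p → x ∈ Hset D (p + 1) := fun hx hxG =>
    ⟨hx, by simpa using hxG⟩
  intro x hx y hy hxy
  by_cases hxG : x ∈ Gset D p <;> by_cases hyG : y ∈ Gset D p
  · exact hinj hxG hyG hxy
  · exact (hmix x hxG y (hH hy hyG) hxy).elim
  · exact (hmix y hyG x (hH hx hxG) hxy.symm).elim
  · refine add_right_cancel (hinj (add_eN_mem_Gset_of_mem_Hset p (hH hx hxG))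
      (add_eN_mem_Gset_of_mem_Hset p (hH hy hyG)) ?_)
    rw [map_add, map_add, hxy]

end Layers

lemma apply_restr_of_le {L l : ℕ} (hl : l ≤ L) {f : (Fin L → ZMod 2) →+ (Fin l → ZMod 2)}
    (hbase : ∀ i : Fin l, f (eN L i.val) = fun j : Fin l => if j = i then 1 else 0)
    {m : ℕ} (hm : m ≤ l) (x : Fin L → ZMod 2) (k : Fin l) :
    f (restr m x) k = if k.val < m then x (Fin.castLE hl k) else 0 := by
  induction m with
  | zero => simp [restr_zero]
  | succ m ih =>
    rw [restr_succ ⟨m, by omega⟩, map_add, ZMod.map_smul, Pi.add_apply, ih (by omega)]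
    simp only [hbase ⟨m, by omega⟩, Pi.smul_apply, Fin.ext_iff, smul_eq_mul]
    rcases lt_trichotomy k.val m with hk | rfl | hk
    · simp [hk, hk.ne, hk.trans (Nat.lt_succ_self m)]
    · simp [Fin.castLE]
    · simp [hk.ne', not_lt_of_gt hk, not_le_of_gt hk]

lemma injOn_Gset_base {L l : ℕ} (hl : l ≤ L) {f : (Fin L → ZMod 2) →+ (Fin l → ZMod 2)}
    (hbase : ∀ i : Fin l, f (eN L i.val) = fun j : Fin l => if j = i then 1 else 0)
    (D : Set (Fin L → ZMod 2)) : Set.InjOn f (Gset D l) := by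
  rintro _ ⟨x, -, rfl⟩ _ ⟨y, -, rfl⟩ hxy
  funext j
  by_cases hj : j.val < l
  · have := congrFun hxy ⟨j, hj⟩
    simpa [apply_restr_of_le hl hbase le_rfl, restr, hj] using this
  · simp [restr, hj]

lemma injOn_Gset_of_le {L l : ℕ} {D : Set (Fin L → ZMod 2)} {M : Type*} [AddMonoid M]
    (f : (Fin L → ZMod 2) →+ M) (hinj : Set.InjOn f (Gset D l))
    (hchoice : ∀ i : ℕ, l < i → i ≤ L → f (eN L (i - 1)) ∉ f '' Fset D i)
    {i : ℕ} (hli : l ≤ i) (hiL : i ≤ L) : Set.InjOn f (Gset D i) := by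
  induction i, hli using Nat.le_induction with
  | base => exact hinj
  | succ i hli ih =>
    exact injOn_Gset_succ f ⟨i, hiL⟩ (ih (by omega)) (hchoice (i + 1) (by omega) hiL)

/-- let `D ⊆ {0,1}^L \ {0}` and let `f` be linear with
`f (e^L_i) = e^l_i` for `i ≤ l` and `f (e^L_i) ∉ f(F_i)` for `i = l+1,…,L`.
Then `f` is injective on `D⁺ = D ∪ {0}`; in particular `f d ≠ 0` for all
`d ∈ D`. -/
theorem stmt17 {L l : ℕ} (hl : l ≤ L)
    (D : Set (Fin L → ZMod 2)) (hD0 : (0 : Fin L → ZMod 2) ∉ D)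
    (f : (Fin L → ZMod 2) → (Fin l → ZMod 2))
    (hlin : ∀ x y, f (x + y) = f x + f y)
    (hbase : ∀ i : Fin l, f (eN L i.val) = fun j : Fin l => if j = i then 1 else 0)
    (hchoice : ∀ i : ℕ, l < i → i ≤ L → f (eN L (i - 1)) ∉ f '' Fset D i) :
    Set.InjOn f (D ∪ {0}) ∧ ∀ d ∈ D, f d ≠ 0 := by
  let φ : (Fin L → ZMod 2) →+ (Fin l → ZMod 2) := AddMonoidHom.mk' f hlin
  have hinj : Set.InjOn f (D ∪ {0}) := by
    rw [← Gset_length]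
    exact injOn_Gset_of_le φ (injOn_Gset_base hl hbase D) hchoice hl le_rfl
  refine ⟨hinj, fun d hd hfd => hD0 ?_⟩
  have hd0 : d = 0 := hinj (Or.inl hd) (Or.inr rfl) (hfd.trans (map_zero φ).symm)
  exact hd0 ▸ hd
end
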